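/- In ℂ^d ⊗ ℂ^d (d ≥ 2), there is no product vector |α⟩⊗|β⟩ with ⟨αβ|ν₁⟩ ≠ 0 and ⟨αβ|ν_k⟩ = 0 for all k = 2, …, d+1, where |ν_k⟩ = Σ_{j=0}^{d-1} e^{2πi(k−1)j/d}|jj⟩ for k ≤ d and |ν_{d+1}⟩ = |01⟩. Consequently the state |ν₁⟩ cannot be conclusively identified by LOCC from this set. -/

import Mathlib

/-!
Put `c j = conj (α j * β j)`. For `k < d` the overlap of `α ⊗ β` with `ν_k` is the discrete
Fourier coefficient `∑ j, c j ω^(k j)`, `ω = exp (2πi/d)`. If it vanishes for every `k ≠ 0`,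
Fourier inversion makes `c` constant, equal to `(1/d) ⟪α ⊗ β, ν_0⟫ ≠ 0`. Hence `α 0 * β 0` and
`α 1 * β 1` are both nonzero, so `α 0 * β 1 ≠ 0`, i.e. the overlap with `|01⟩` cannot vanish.
-/

open Finset
open scoped ComplexConjugate

namespace IsPrimitiveRoot

variable {R : Type*} [CommRing R] [NoZeroDivisors R] {ζ : R} {d : ℕ}

theorem sum_range_pow_mul (hζ : IsPrimitiveRoot ζ d) (m : ℕ) :
    ∑ k ∈ range d, ζ ^ (m * k) = if d ∣ m then (d : R) else 0 := by
  simp only [pow_mul]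
  split_ifs with hm
  · simp [(hζ.pow_eq_one_iff_dvd m).2 hm]
  · have hne : ζ ^ m ≠ 1 := mt (hζ.pow_eq_one_iff_dvd m).1 hm
    refine eq_zero_of_ne_zero_of_mul_left_eq_zero (sub_ne_zero_of_ne hne.symm) ?_
    rw [mul_neg_geom_sum, ← pow_mul, mul_comm, pow_mul, hζ.pow_eq_one, one_pow, sub_self]

theorem mul_eq_sum_of_sum_mul_pow_eq_zero (hζ : IsPrimitiveRoot ζ d) (c : Fin d → R)
    (hc : ∀ k, 0 < k → k < d → ∑ i, c i * ζ ^ (k * i) = 0) (j : Fin d) :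
    d * c j = ∑ i, c i := by
  have hd : 0 < d := j.pos
  -- `ζ ^ (d - j)` stands in for `ζ⁻¹ ^ j`, keeping the inversion inside a ring.
  have orth : ∀ i : Fin d,
      ∑ k ∈ range d, ζ ^ ((i + (d - j)) * k) = if i = j then (d : R) else 0 := by
    intro i
    have hdvd : d ∣ i + (d - j) ↔ i = j := by
      refine ⟨fun h => ?_, fun h => h ▸ ⟨1, by omega⟩⟩
      have := Nat.eq_of_dvd_of_lt_two_mul (by omega) h (by omega)
      exact Fin.ext (by omega)
    rw [hζ.sum_range_pow_mul, if_congr hdvd rfl rfl]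
  calc (d : R) * c j = ∑ i, c i * ∑ k ∈ range d, ζ ^ ((i + (d - j)) * k) := by
        simp only [orth, mul_ite, mul_zero, sum_ite_eq', mem_univ, if_true]
        exact mul_comm _ _
    _ = ∑ k ∈ range d, ζ ^ (k * (d - j)) * ∑ i, c i * ζ ^ (k * i) := by
        simp_rw [mul_sum]
        rw [sum_comm]
        refine sum_congr rfl fun k _ => sum_congr rfl fun i _ => ?_
        rw [add_mul, pow_add]
        ring
    _ = ∑ i, c i := by
        rw [sum_eq_single 0 (fun k hk hk0 => by rw [hc k (by omega) (mem_range.1 hk), mul_zero])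
          (by simp [hd])]
        simp

end IsPrimitiveRoot

open scoped ComplexInnerProductSpace

/-- The d+1 states in ℂ^d ⊗ ℂ^d (2 ≤ d): for k < d,
ν_k = Σ_j e^{2πi k j / d} |jj⟩ (0-based k corresponds to k−1 in the 1-based
labelling ν_1,…,ν_d), and ν_d = |01⟩. -/
noncomputable def nu (d : ℕ) (hd : 2 ≤ d) (k : Fin (d + 1)) :
    EuclideanSpace ℂ (Fin d × Fin d) :=
  if (k : ℕ) < d then
    WithLp.toLp 2 (fun p : Fin d × Fin d => if p.1 = p.2 then
      Complex.exp (2 * Real.pi * Complex.I * (k : ℕ) * (p.2 : ℕ) / d) else 0)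
  else
    WithLp.toLp 2 (fun p : Fin d × Fin d => if p = (⟨0, by omega⟩, ⟨1, by omega⟩) then 1 else 0)

noncomputable def prodVec (d : ℕ) (α β : EuclideanSpace ℂ (Fin d)) :
    EuclideanSpace ℂ (Fin d × Fin d) :=
  WithLp.toLp 2 (fun p : Fin d × Fin d => α p.1 * β p.2)

section Overlaps

variable {d : ℕ} (hd : 2 ≤ d) (α β : EuclideanSpace ℂ (Fin d))

theorem inner_prodVec_nu_of_lt {k : ℕ} (hk : k < d) :
    ⟪prodVec d α β, nu d hd ⟨k, by omega⟩⟫ =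
      ∑ j, conj (α j * β j) * Complex.exp (2 * Real.pi * Complex.I / d) ^ (k * (j : ℕ)) := by
  simp only [PiLp.inner_apply, RCLike.inner_apply', nu, prodVec, if_pos hk,
    Fintype.sum_prod_type, mul_ite, mul_zero, sum_ite_eq, mem_univ, if_true]
  refine sum_congr rfl fun j _ => ?_
  rw [← Complex.exp_nat_mul]
  push_cast
  ring_nf

theorem inner_prodVec_nu_last :
    ⟪prodVec d α β, nu d hd (Fin.last d)⟫ = conj (α ⟨0, by omega⟩ * β ⟨1, by omega⟩) := by
  simp [PiLp.inner_apply, nu, prodVec]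

end Overlaps

/-- There is no product vector with nonzero overlap with ν₁ and vanishing
overlap with all the other ν_k: by Chefles' criterion, ν₁ cannot be
conclusively identified by LOCC from this set. -/
theorem stmt8 (d : ℕ) (hd : 2 ≤ d) :
    ¬ ∃ α β : EuclideanSpace ℂ (Fin d),
      ⟪prodVec d α β, nu d hd 0⟫ ≠ 0 ∧
      ∀ k : Fin (d + 1), k ≠ 0 → ⟪prodVec d α β, nu d hd k⟫ = 0 := by
  rintro ⟨α, β, hν₀, hν⟩
  have hζ := Complex.isPrimitiveRoot_exp d (by omega)
  have hconst := hζ.mul_eq_sum_of_sum_mul_pow_eq_zero (fun j => conj (α j * β j))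
    fun k hk₀ hkd => by
      rw [← inner_prodVec_nu_of_lt hd α β hkd]
      exact hν _ (by simp [Fin.ext_iff]; omega)
  have hsum : ⟪prodVec d α β, nu d hd 0⟫ = ∑ j, conj (α j * β j) := by
    simpa using inner_prodVec_nu_of_lt hd α β (k := 0) (by omega)
  have hdiag : ∀ j, α j * β j ≠ 0 := fun j h =>
    hν₀ (by rw [hsum, ← hconst j, h, map_zero, mul_zero])
  have hlast := hν (Fin.last d) (by simp [Fin.ext_iff]; omega)
  rw [inner_prodVec_nu_last, map_eq_zero] at hlast
  exact mul_ne_zero (left_ne_zero_of_mul (hdiag ⟨0, by omega⟩))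
    (right_ne_zero_of_mul (hdiag ⟨1, by omega⟩)) hlast
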